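/- arXiv:2601.21898 — 2 statements merged into one kernel-verified Lean document; each statement's English description precedes it below -/
import Mathlib

section
/- Let E be a real inner product space, J : E → ℝ differentiable with gradient ∇J that is L-Lipschitz (L > 0), and J bounded below by J_inf. Let (Ω, 𝒜, P) be a probability space with filtration (𝓕_t)_{t∈ℕ}, and let (W_t)_{t≥0}, (G_t)_{t≥0} be E-valued random variables such that W_t is 𝓕_t-measurable, W_{t+1} = W_t − η·G_t for a fixed step size η ∈ (0, 1/L], and almost surely the conditional expectation satisfies E[G_t | 𝓕_t] = ∇J(W_t) and E[‖G_t − ∇J(W_t)‖² | 𝓕_t] ≤ σ², with J(W_t) and ‖G_t‖² integrable for all t. Then for every integer T ≥ 1: min_{0 ≤ t ≤ T−1} E[‖∇J(W_t)‖²] ≤ 2·(E[J(W_0)] − J_inf)/(η·T) + L·η·σ². -/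
/-!
Along a segment, the `L`-Lipschitz gradient gives the descent inequality
`J y ≤ J x + ⟪∇J x, y - x⟫ + L / 2 * ‖y - x‖ ^ 2`. Applied to one SGD step and integrated,
the pull-out property of conditional expectation turns `E⟪∇J (W t), G t⟫` into
`E‖∇J (W t)‖²`, and `E‖G t‖²` into `E‖G t - ∇J (W t)‖² + E‖∇J (W t)‖² ≤ σ² + E‖∇J (W t)‖²`.
With `L η ≤ 1` this yields `E J(W (t+1)) + η/2 E‖∇J (W t)‖² ≤ E J(W t) + η/2 L η σ²`;
telescoping over `t < T` and `J ≥ Jinf` bound the average of `E‖∇J (W t)‖²`, hence its minimum.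
-/

open MeasureTheory Finset
open scoped RealInnerProductSpace

section Descent

variable {E : Type*} [NormedAddCommGroup E] [InnerProductSpace ℝ E] [CompleteSpace E]

theorem le_add_inner_gradient_add_sq_of_lipschitz_gradient {J : E → ℝ} {L : ℝ}
    (hdiff : Differentiable ℝ J)
    (hlip : ∀ x y : E, ‖gradient J x - gradient J y‖ ≤ L * ‖x - y‖) (x y : E) :
    J y ≤ J x + ⟪gradient J x, y - x⟫ + L / 2 * ‖y - x‖ ^ 2 := by
  set v := y - x
  -- The claim is `φ 1 ≤ φ 0`; `φ` is antitone on `[0, ∞)` because `∇J` is `L`-Lipschitz.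
  let φ : ℝ → ℝ := fun s => J (x + s • v) - s * ⟪gradient J x, v⟫ - L / 2 * s ^ 2 * ‖v‖ ^ 2
  let φ' : ℝ → ℝ := fun s => ⟪gradient J (x + s • v), v⟫ - ⟪gradient J x, v⟫ - L * s * ‖v‖ ^ 2
  have hφ : ∀ s, HasDerivAt φ (φ' s) s := by
    intro s
    have hline : HasDerivAt (fun s : ℝ => x + s • v) v s := by
      simpa using ((hasDerivAt_id s).smul_const v).const_add x
    have hJ := (hdiff (x + s • v)).hasGradientAt.hasFDerivAt.comp_hasDerivAt s hline
    rw [InnerProductSpace.toDual_apply_apply] at hJ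
    refine ((hJ.sub ((hasDerivAt_id s).mul_const ⟪gradient J x, v⟫)).sub
      ((((hasDerivAt_id s).pow 2).const_mul (L / 2)).mul_const (‖v‖ ^ 2))).congr_deriv ?_
    simp only [φ', id]
    ring
  have hφ'_nonpos : ∀ s ∈ interior (Set.Ici (0 : ℝ)), φ' s ≤ 0 := by
    intro s hs
    rw [interior_Ici] at hs
    have hs : 0 ≤ s := hs.le
    calc φ' s = ⟪gradient J (x + s • v) - gradient J x, v⟫ - L * s * ‖v‖ ^ 2 := by
          simp only [φ', inner_sub_left]
      _ ≤ ‖gradient J (x + s • v) - gradient J x‖ * ‖v‖ - L * s * ‖v‖ ^ 2 := by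
          gcongr; exact real_inner_le_norm _ _
      _ ≤ L * ‖s • v‖ * ‖v‖ - L * s * ‖v‖ ^ 2 := by
          gcongr; simpa using hlip (x + s • v) x
      _ = 0 := by rw [norm_smul, Real.norm_of_nonneg hs]; ring
  have hanti := antitoneOn_of_hasDerivWithinAt_nonpos (convex_Ici 0)
    (fun s _ => (hφ s).continuousAt.continuousWithinAt)
    (fun s _ => (hφ s).hasDerivWithinAt) hφ'_nonpos
  have h := hanti Set.self_mem_Ici (Set.mem_Ici.2 zero_le_one) zero_le_one
  simp only [φ, one_smul, zero_smul, add_zero, add_sub_cancel, v] at h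
  linarith

end Descent

section CondExp

variable {E : Type*} [NormedAddCommGroup E] [InnerProductSpace ℝ E]
  {Ω : Type*} {m mΩ : MeasurableSpace Ω} {μ : Measure Ω} {F G : Ω → E}

theorem MeasureTheory.MemLp.integrable_inner (hF : MemLp F 2 μ) (hG : MemLp G 2 μ) :
    Integrable (fun ω => ⟪F ω, G ω⟫) μ :=
  memLp_one_iff_integrable.1 <| hF.of_bilin (fun a b => ⟪a, b⟫) 1 hG (hF.1.inner hG.1)
    (ae_of_all _ fun ω => by simpa using nnnorm_inner_le_nnnorm (𝕜 := ℝ) (F ω) (G ω))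

theorem integral_le_of_ae_condExp_le [IsProbabilityMeasure μ] (hm : m ≤ mΩ) {f : Ω → ℝ}
    {c : ℝ} (hf : ∀ᵐ ω ∂μ, μ[f | m] ω ≤ c) : ∫ ω, f ω ∂μ ≤ c :=
  calc ∫ ω, f ω ∂μ = ∫ ω, μ[f | m] ω ∂μ := (integral_condExp hm).symm
    _ ≤ ∫ _, c ∂μ := integral_mono_ae integrable_condExp (integrable_const c) hf
    _ = c := by simp

variable [CompleteSpace E] [IsFiniteMeasure μ]

theorem integral_inner_eq_integral_norm_sq_of_condExp_ae_eq (hm : m ≤ mΩ)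
    (hF : StronglyMeasurable[m] F) (hG : MemLp G 2 μ) (hGF : μ[G | m] =ᵐ[μ] F) :
    ∫ ω, ⟪F ω, G ω⟫ ∂μ = ∫ ω, ‖F ω‖ ^ 2 ∂μ := by
  have hF2 : MemLp F 2 μ := (hG.condExp one_le_two).ae_eq hGF
  have hpull : μ[fun ω => ⟪F ω, G ω⟫ | m] =ᵐ[μ] fun ω => ⟪F ω, μ[G | m] ω⟫ :=
    condExp_bilin_of_stronglyMeasurable_left (innerSL ℝ) hF (hF2.integrable_inner hG)
      (hG.integrable one_le_two)
  calc ∫ ω, ⟪F ω, G ω⟫ ∂μ = ∫ ω, μ[fun ω => ⟪F ω, G ω⟫ | m] ω ∂μ := (integral_condExp hm).symm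
    _ = ∫ ω, ‖F ω‖ ^ 2 ∂μ := by
      refine integral_congr_ae ?_
      filter_upwards [hpull, hGF] with ω h1 h2
      rw [h1, h2, real_inner_self_eq_norm_sq]

theorem integral_norm_sq_eq_integral_norm_sub_sq_add_of_condExp_ae_eq (hm : m ≤ mΩ)
    (hF : StronglyMeasurable[m] F) (hG : MemLp G 2 μ) (hGF : μ[G | m] =ᵐ[μ] F) :
    ∫ ω, ‖G ω‖ ^ 2 ∂μ = ∫ ω, ‖G ω - F ω‖ ^ 2 ∂μ + ∫ ω, ‖F ω‖ ^ 2 ∂μ := by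
  have hF2 : MemLp F 2 μ := (hG.condExp one_le_two).ae_eq hGF
  have hpt : ∀ ω, ‖G ω‖ ^ 2 = ‖G ω - F ω‖ ^ 2 + 2 * ⟪F ω, G ω⟫ - ‖F ω‖ ^ 2 := by
    intro ω
    rw [← real_inner_self_eq_norm_sq, ← real_inner_self_eq_norm_sq, ← real_inner_self_eq_norm_sq]
    simp only [inner_sub_left, inner_sub_right, real_inner_comm (F ω) (G ω)]
    ring
  have hdiff : Integrable (fun ω => ‖G ω - F ω‖ ^ 2) μ :=
    (hG.sub hF2).integrable_norm_pow two_ne_zero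
  have hinner : Integrable (fun ω => 2 * ⟪F ω, G ω⟫) μ := (hF2.integrable_inner hG).const_mul 2
  rw [integral_congr_ae (ae_of_all _ hpt),
    integral_sub (hdiff.add hinner : Integrable (fun ω => _ + _) μ)
      (hF2.integrable_norm_pow two_ne_zero), integral_add hdiff hinner, integral_const_mul,
    integral_inner_eq_integral_norm_sq_of_condExp_ae_eq hm hF hG hGF]
  ring

end CondExp

section SGD

variable {E : Type*} [NormedAddCommGroup E] [InnerProductSpace ℝ E] [CompleteSpace E]
  {Ω : Type*} {m mΩ : MeasurableSpace Ω} {μ : Measure Ω} [IsProbabilityMeasure μ]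

theorem integral_sgd_step_le {J : E → ℝ} {L η σ : ℝ} (hdiff : Differentiable ℝ J)
    (hlip : ∀ x y : E, ‖gradient J x - gradient J y‖ ≤ L * ‖x - y‖) (hL : 0 ≤ L) (hη : 0 ≤ η)
    (hLη : L * η ≤ 1) (hm : m ≤ mΩ) {x y g : Ω → E} (hx : StronglyMeasurable[m] x)
    (hy : ∀ ω, y ω = x ω - η • g ω) (hg : MemLp g 2 μ)
    (hmean : μ[g | m] =ᵐ[μ] fun ω => gradient J (x ω))
    (hvar : ∀ᵐ ω ∂μ, μ[fun ω' => ‖g ω' - gradient J (x ω')‖ ^ 2 | m] ω ≤ σ ^ 2)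
    (hJx : Integrable (fun ω => J (x ω)) μ) (hJy : Integrable (fun ω => J (y ω)) μ) :
    ∫ ω, J (y ω) ∂μ + η / 2 * ∫ ω, ‖gradient J (x ω)‖ ^ 2 ∂μ
      ≤ ∫ ω, J (x ω) ∂μ + η / 2 * (L * η * σ ^ 2) := by
  set F : Ω → E := fun ω => gradient J (x ω)
  have hF : StronglyMeasurable[m] F :=
    (LipschitzWith.of_dist_le' (by simpa only [dist_eq_norm] using hlip)).continuous
      |>.comp_stronglyMeasurable hx
  have hF2 : MemLp F 2 μ := (hg.condExp one_le_two).ae_eq hmean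
  have hinner : Integrable (fun ω => η * ⟪F ω, g ω⟫) μ := (hF2.integrable_inner hg).const_mul η
  have hg2 : Integrable (fun ω => L * η ^ 2 / 2 * ‖g ω‖ ^ 2) μ :=
    (hg.integrable_norm_pow two_ne_zero).const_mul _
  have hpt : ∀ ω, J (y ω) ≤ J (x ω) - η * ⟪F ω, g ω⟫ + L * η ^ 2 / 2 * ‖g ω‖ ^ 2 := by
    intro ω
    have h := le_add_inner_gradient_add_sq_of_lipschitz_gradient hdiff hlip (x ω) (y ω)
    rw [hy, sub_sub_cancel_left, inner_neg_right, real_inner_smul_right, norm_neg, norm_smul,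
      Real.norm_of_nonneg hη] at h
    rw [hy]
    linear_combination h
  have hJy_le : ∫ ω, J (y ω) ∂μ ≤ ∫ ω, J (x ω) ∂μ - η * ∫ ω, ⟪F ω, g ω⟫ ∂μ
      + L * η ^ 2 / 2 * ∫ ω, ‖g ω‖ ^ 2 ∂μ := by
    rw [← integral_const_mul, ← integral_const_mul, ← integral_sub hJx hinner,
      ← integral_add (hJx.sub hinner : Integrable (fun ω => _ - _) μ) hg2]
    exact integral_mono hJy ((hJx.sub hinner).add hg2) hpt
  have hvar_int : ∫ ω, ‖g ω - F ω‖ ^ 2 ∂μ ≤ σ ^ 2 := integral_le_of_ae_condExp_le hm hvar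
  rw [integral_inner_eq_integral_norm_sq_of_condExp_ae_eq hm hF hg hmean,
    integral_norm_sq_eq_integral_norm_sub_sq_add_of_condExp_ae_eq hm hF hg hmean] at hJy_le
  have hb : 0 ≤ ∫ ω, ‖F ω‖ ^ 2 ∂μ := integral_nonneg fun ω => by positivity
  nlinarith [mul_le_mul_of_nonneg_left hvar_int (by positivity : 0 ≤ L * η ^ 2 / 2),
    mul_le_mul_of_nonneg_right hLη (mul_nonneg hη hb)]

end SGD

theorem inf'_range_le_of_add_mul_le {a b : ℕ → ℝ} {c D A : ℝ} (hc : 0 < c)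
    (hstep : ∀ t, a (t + 1) + c * b t ≤ a t + c * D) (hA : ∀ t, A ≤ a t) {T : ℕ}
    (hT : (range T).Nonempty) :
    (range T).inf' hT b ≤ (a 0 - A) / (c * T) + D := by
  have htel : ∀ n : ℕ, a n + c * ∑ t ∈ range n, b t ≤ a 0 + n * (c * D) := by
    intro n
    induction n with
    | zero => simp
    | succ n ih =>
      rw [sum_range_succ]
      push_cast
      linarith [hstep n]
  have hmin : T * (range T).inf' hT b ≤ ∑ t ∈ range T, b t := by
    simpa using card_nsmul_le_sum (range T) b _ fun t ht => inf'_le b ht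
  have hTpos : (0 : ℝ) < T := by exact_mod_cast nonempty_range_iff.1 hT |> Nat.pos_of_ne_zero
  rw [div_add' _ _ _ (by positivity), le_div_iff₀ (by positivity)]
  nlinarith [htel T, hA T, mul_le_mul_of_nonneg_left hmin hc.le]

/-- **Stationarity of SGD**: for an `L`-smooth objective `J` bounded below by `Jinf`,
SGD iterates `W (t+1) = W t - η • G t` with unbiased stochastic gradients of conditional
variance at most `σ²` and step size `η ∈ (0, 1/L]` satisfy, for every `T ≥ 1`,
`min_{0 ≤ t ≤ T-1} E[‖∇J(W t)‖²] ≤ 2 (E[J(W 0)] - Jinf)/(η T) + L η σ²`. -/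
theorem sgd_min_expected_sq_grad_le
    {E : Type*} [NormedAddCommGroup E] [InnerProductSpace ℝ E] [CompleteSpace E]
    {Ω : Type*} {mΩ : MeasurableSpace Ω} {μ : Measure Ω} [IsProbabilityMeasure μ]
    (ℱ : Filtration ℕ mΩ)
    (J : E → ℝ) (L Jinf σ η : ℝ)
    (hL : 0 < L)
    (hdiff : Differentiable ℝ J)
    (hlip : ∀ x y : E, ‖gradient J x - gradient J y‖ ≤ L * ‖x - y‖)
    (hbd : ∀ x : E, Jinf ≤ J x)
    (hη : 0 < η) (hηL : η ≤ 1 / L)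
    (W G : ℕ → Ω → E)
    (hWmeas : ∀ t, StronglyMeasurable[ℱ t] (W t))
    (hrec : ∀ t ω, W (t + 1) ω = W t ω - η • G t ω)
    (hmean : ∀ t, μ[G t | ℱ t] =ᵐ[μ] fun ω => gradient J (W t ω))
    (hvar : ∀ t, ∀ᵐ ω ∂μ,
      (μ[fun ω' => ‖G t ω' - gradient J (W t ω')‖ ^ 2 | ℱ t]) ω ≤ σ ^ 2)
    (hJint : ∀ t, Integrable (fun ω => J (W t ω)) μ)
    (hGint : ∀ t, Integrable (fun ω => ‖G t ω‖ ^ 2) μ)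
    (T : ℕ) (hT : 1 ≤ T) :
    (Finset.range T).inf' (Finset.nonempty_range_iff.mpr (by omega))
        (fun t => ∫ ω, ‖gradient J (W t ω)‖ ^ 2 ∂μ)
      ≤ 2 * ((∫ ω, J (W 0 ω) ∂μ) - Jinf) / (η * T) + L * η * σ ^ 2 := by
  have hLη : L * η ≤ 1 := by rwa [le_div_iff₀ hL, mul_comm] at hηL
  have hG : ∀ t, MemLp (G t) 2 μ := fun t => by
    have hG_eq : G t = fun ω => η⁻¹ • (W t ω - W (t + 1) ω) := by
      funext ω
      rw [hrec, sub_sub_cancel, inv_smul_smul₀ hη.ne']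
    refine (memLp_two_iff_integrable_sq_norm ?_).2 (hGint t)
    rw [hG_eq]
    exact ((((hWmeas t).mono (ℱ.le t)).sub ((hWmeas (t + 1)).mono (ℱ.le _))).const_smul
      η⁻¹).aestronglyMeasurable
  have hstep := fun t => integral_sgd_step_le hdiff hlip hL.le hη.le hLη (ℱ.le t) (hWmeas t)
    (hrec t) (hG t) (hmean t) (hvar t) (hJint t) (hJint (t + 1))
  have hJinf : ∀ t, Jinf ≤ ∫ ω, J (W t ω) ∂μ := fun t => by
    simpa using integral_mono (integrable_const Jinf) (hJint t) fun ω => hbd (W t ω)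
  calc _ ≤ ((∫ ω, J (W 0 ω) ∂μ) - Jinf) / (η / 2 * T) + L * η * σ ^ 2 :=
        inf'_range_le_of_add_mul_le (half_pos hη) hstep hJinf _
    _ = _ := by ring
end

section
/- Let E be a real inner product space, L : E → ℝ, and W, V ∈ E with V ≠ 0. Suppose L is twice continuously differentiable on an open set containing the segment {W + (γ/2)·V : γ ∈ [0, 1]}, with gradient ∇L and Hessian ∇²L, and define μ(V) := (2/‖V‖²)·∫₀¹ (1 − γ)·⟨V, ∇²L(W + (γ/2)V)[V]⟩ dγ. Let ε ≥ 0 satisfy ‖∇L(W)‖ ≤ ε. If μ(V) > 0 and ‖V‖ > 4·ε/μ(V), then L(W + V/2) > L(W). -/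
open scoped RealInnerProductSpace

/-!
Along the merge path `γ ↦ W + (γ/2) • V`, Taylor's formula with integral remainder gives
`L(W + V/2) - L(W) = ⟪∇L(W), V/2⟫ + μ(V) ‖V‖² / 8`: the factor `1/4` from differentiating the
path twice turns the weighted curvature integral into `μ(V) ‖V‖² / 8`. The first-order term is at
least `-ε ‖V‖ / 2` by Cauchy–Schwarz, and `μ(V) ‖V‖ > 4ε` makes the quadratic term win.
-/

theorem taylor_integral_remainder_of_hasDerivAt {F : Type*} [NormedAddCommGroup F]
    [NormedSpace ℝ F] [CompleteSpace F] {g g' g'' : ℝ → F} {a b : ℝ}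
    (hg : ∀ t ∈ Set.uIcc a b, HasDerivAt g (g' t) t)
    (hg' : ∀ t ∈ Set.uIcc a b, HasDerivAt g' (g'' t) t)
    (hg'' : IntervalIntegrable g'' MeasureTheory.volume a b) :
    g b = g a + (b - a) • g' a + ∫ t in a..b, (b - t) • g'' t := by
  have hderiv : ∀ t ∈ Set.uIcc a b,
      HasDerivAt (fun s => (b - s) • g' s + g s) ((b - t) • g'' t) t := by
    intro t ht
    have := (((hasDerivAt_id' t).const_sub b).fun_smul (hg' t ht)).fun_add (hg t ht)
    convert this using 1
    simp
  have hint : IntervalIntegrable (fun t => (b - t) • g'' t) MeasureTheory.volume a b :=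
    hg''.continuousOn_smul (by fun_prop)
  rw [intervalIntegral.integral_eq_sub_of_hasDerivAt hderiv hint]
  simp only [sub_self, zero_smul, zero_add]
  abel

theorem ContDiffOn.eq_add_fderiv_add_integral_fderiv_fderiv
    {E F : Type*} [NormedAddCommGroup E] [NormedSpace ℝ E]
    [NormedAddCommGroup F] [NormedSpace ℝ F] [CompleteSpace F]
    {f : E → F} {U : Set E} (hf : ContDiffOn ℝ 2 f U) (hU : IsOpen U) {x v : E}
    (hseg : ∀ t ∈ Set.Icc (0 : ℝ) 1, x + t • v ∈ U) :
    f (x + v) = f x + fderiv ℝ f x v +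
      ∫ t in (0 : ℝ)..1, (1 - t) • fderiv ℝ (fderiv ℝ f) (x + t • v) v v := by
  have hf' : ContDiffOn ℝ 1 (fderiv ℝ f) U := hf.fderiv_of_isOpen hU (by norm_num)
  have hline : ∀ t : ℝ, HasDerivAt (fun s : ℝ => x + s • v) v t := fun t => by
    simpa using ((hasDerivAt_id t).smul_const v).const_add x
  have htaylor := taylor_integral_remainder_of_hasDerivAt (a := 0) (b := 1)
    (g := fun t => f (x + t • v)) (g' := fun t => fderiv ℝ f (x + t • v) v)
    (g'' := fun t => fderiv ℝ (fderiv ℝ f) (x + t • v) v v) ?_ ?_ ?_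
  · simpa using htaylor
  · intro t ht
    rw [Set.uIcc_of_le zero_le_one] at ht
    exact ((hf.differentiableOn two_ne_zero).differentiableAt
      (hU.mem_nhds (hseg t ht))).hasFDerivAt.comp_hasDerivAt t (hline t)
  · intro t ht
    rw [Set.uIcc_of_le zero_le_one] at ht
    have := ((hf'.differentiableOn one_ne_zero).differentiableAt
      (hU.mem_nhds (hseg t ht))).hasFDerivAt.comp_hasDerivAt t (hline t)
    simpa using this.clm_apply (hasDerivAt_const t v)
  · apply ContinuousOn.intervalIntegrable
    rw [Set.uIcc_of_le zero_le_one]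
    have hcont : ContinuousOn (fderiv ℝ (fderiv ℝ f)) U :=
      hf'.continuousOn_fderiv_of_isOpen hU le_rfl
    exact ((hcont.comp (by fun_prop) hseg).clm_apply continuousOn_const).clm_apply
      continuousOn_const

theorem neg_norm_gradient_mul_norm_le_fderiv {E : Type*} [NormedAddCommGroup E]
    [InnerProductSpace ℝ E] [CompleteSpace E] (f : E → ℝ) (x v : E) :
    -(‖gradient f x‖ * ‖v‖) ≤ fderiv ℝ f x v :=
  calc -(‖gradient f x‖ * ‖v‖) ≤ ⟪gradient f x, v⟫ :=
        neg_le_of_abs_le (abs_real_inner_le_norm _ _)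
    _ = fderiv ℝ f x v := inner_gradient_left

theorem merge_degradation_guaranteed_general
    {E : Type*} [NormedAddCommGroup E] [InnerProductSpace ℝ E] [CompleteSpace E]
    (L : E → ℝ) (W V : E) (hV : V ≠ 0)
    (U : Set E) (hU : IsOpen U)
    (hseg : ∀ γ ∈ Set.Icc (0 : ℝ) 1, W + (γ / 2) • V ∈ U)
    (hC2 : ContDiffOn ℝ 2 L U)
    (μV : ℝ)
    (hμV : μV = (2 / ‖V‖ ^ 2) *
      ∫ γ in (0 : ℝ)..1, (1 - γ) * ((fderiv ℝ (fderiv ℝ L) (W + (γ / 2) • V)) V V))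
    (ε : ℝ)
    (hgrad : ‖gradient L W‖ ≤ ε)
    (hμVpos : 0 < μV)
    (hVbig : ‖V‖ > 4 * ε / μV) :
    L (W + (1 / 2 : ℝ) • V) > L W := by
  have hpath : ∀ γ : ℝ, W + γ • (1 / 2 : ℝ) • V = W + (γ / 2) • V := fun γ => by
    rw [smul_smul, mul_one_div]
  have htaylor := hC2.eq_add_fderiv_add_integral_fderiv_fderiv hU (x := W)
    (v := (1 / 2 : ℝ) • V) fun γ hγ => (hpath γ).symm ▸ hseg γ hγ
  have hcurv : ∫ γ in (0 : ℝ)..1, (1 - γ) •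
      fderiv ℝ (fderiv ℝ L) (W + γ • (1 / 2 : ℝ) • V) ((1 / 2 : ℝ) • V) ((1 / 2 : ℝ) • V)
      = μV * ‖V‖ ^ 2 / 8 := by
    have hVpos : 0 < ‖V‖ := norm_pos_iff.mpr hV
    calc _ = ∫ γ in (0 : ℝ)..1,
          1 / 4 * ((1 - γ) * fderiv ℝ (fderiv ℝ L) (W + (γ / 2) • V) V V) := by
          refine intervalIntegral.integral_congr fun γ _ => ?_
          simp only [hpath, map_smul, FunLike.coe_smul, Pi.smul_apply, smul_eq_mul]
          ring
      _ = μV * ‖V‖ ^ 2 / 8 := by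
          rw [intervalIntegral.integral_const_mul, hμV]
          field_simp
          ring
  have hgrad_term : -(ε * ‖V‖ / 2) ≤ fderiv ℝ L W ((1 / 2 : ℝ) • V) :=
    calc -(ε * ‖V‖ / 2) = -(ε * ‖(1 / 2 : ℝ) • V‖) := by rw [norm_smul]; norm_num; ring
      _ ≤ -(‖gradient L W‖ * ‖(1 / 2 : ℝ) • V‖) := by gcongr
      _ ≤ _ := neg_norm_gradient_mul_norm_le_fderiv L W _
  have hbig : 4 * ε < μV * ‖V‖ := by
    rw [gt_iff_lt, div_lt_iff₀ hμVpos] at hVbig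
    linarith
  rw [htaylor, hcurv]
  nlinarith [norm_pos_iff.mpr hV]

/-- **When degradation becomes guaranteed**: if `L` is `C²` on an open set containing the
merge path `{W + (γ/2) • V : γ ∈ [0,1]}`, `μV` is the weighted directional curvature along
the path, `‖∇L(W)‖ ≤ ε`, `μV > 0`, and `‖V‖ > 4ε/μV`, then `L(W + V/2) > L(W)`. -/
theorem merge_degradation_guaranteed
    {E : Type*} [NormedAddCommGroup E] [InnerProductSpace ℝ E] [CompleteSpace E]
    (L : E → ℝ) (W V : E) (hV : V ≠ 0)
    (U : Set E) (hU : IsOpen U)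
    (hseg : ∀ γ ∈ Set.Icc (0 : ℝ) 1, W + (γ / 2) • V ∈ U)
    (hC2 : ContDiffOn ℝ 2 L U)
    (μV : ℝ)
    (hμV : μV = (2 / ‖V‖ ^ 2) *
      ∫ γ in (0 : ℝ)..1, (1 - γ) * ((fderiv ℝ (fderiv ℝ L) (W + (γ / 2) • V)) V V))
    (ε : ℝ) (hε : 0 ≤ ε)
    (hgrad : ‖gradient L W‖ ≤ ε)
    (hμVpos : 0 < μV)
    (hVbig : ‖V‖ > 4 * ε / μV) :
    L (W + (1 / 2 : ℝ) • V) > L W :=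
  merge_degradation_guaranteed_general L W V hV U hU hseg hC2 μV hμV ε hgrad hμVpos hVbig
end
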